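/- Let x be a standard Gaussian random vector on ℝ^d (x ~ N(0, I_d)) and let a, b ∈ ℝ^d be nonzero with ‖b‖ ≤ ‖a‖. Then P(⟨x, a⟩² < ⟨x, b⟩²) ≤ ‖b‖ / ‖a‖. -/

import Mathlib

open MeasureTheory ProbabilityTheory Real Set ENNReal NNReal Filter RealInnerProductSpace

variable {α β : Type*} [MeasurableSpace α] [MeasurableSpace β]

lemma map_withDensity_equiv (e : α ≃ᵐ β) (μ : Measure α) {f : α → ℝ≥0∞} (hf : Measurable f) :
    (μ.withDensity f).map e = (μ.map e).withDensity (f ∘ e.symm) := by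
  ext s hs
  rw [Measure.map_apply e.measurable hs, withDensity_apply _ hs,
    withDensity_apply _ (e.measurable hs),
    setLIntegral_map hs (hf.comp e.symm.measurable) e.measurable]
  simp

lemma prod_withDensity (μ : Measure α) (ν : Measure β) [SigmaFinite μ] [SigmaFinite ν]
    {f : α → ℝ≥0∞} {g : β → ℝ≥0∞} (hf : Measurable f) (hg : Measurable g)
    [SigmaFinite (μ.withDensity f)] [SigmaFinite (ν.withDensity g)] :
    (μ.withDensity f).prod (ν.withDensity g)
      = (μ.prod ν).withDensity (fun p => f p.1 * g p.2) := by
  refine Measure.prod_eq fun s t hs ht => ?_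
  rw [withDensity_apply _ (hs.prod ht), ← Measure.prod_restrict,
    lintegral_prod_mul hf.aemeasurable hg.aemeasurable,
    withDensity_apply _ hs, withDensity_apply _ ht]

lemma pi_gauss : ∀ n : ℕ, Measure.pi (fun _ : Fin n => gaussianReal 0 1)
    = (Measure.pi fun _ : Fin n => (volume : Measure ℝ)).withDensity
        (fun x => ∏ i, gaussianPDF 0 1 (x i)) := by
  intro n
  induction n with
  | zero =>
      rw [Measure.pi_of_empty, Measure.pi_of_empty]
      have : (fun x : Fin 0 → ℝ => ∏ i, gaussianPDF 0 1 (x i)) = (1 : (Fin 0 → ℝ) → ℝ≥0∞) := by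
        funext x; simp
      rw [this, withDensity_one]
  | succ n ih =>
      have h1 : (1 : ℝ≥0) ≠ 0 := one_ne_zero
      have hγ : gaussianReal 0 1 = volume.withDensity (gaussianPDF 0 1) :=
        gaussianReal_of_var_ne_zero 0 h1
      set e := MeasurableEquiv.piFinSuccAbove (fun _ : Fin (n+1) => ℝ) 0 with he
      have hmp := (measurePreserving_piFinSuccAbove
        (fun _ : Fin (n+1) => gaussianReal 0 1) 0).symm
      rw [← hmp.map_eq]
      haveI : SigmaFinite ((volume : Measure ℝ).withDensity (gaussianPDF 0 1)) := by
        rw [← hγ]; infer_instance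
      haveI : SigmaFinite ((Measure.pi fun _ : Fin n => (volume : Measure ℝ)).withDensity
          (fun x => ∏ i, gaussianPDF 0 1 (x i))) := by
        rw [← ih]; infer_instance
      have hg : Measurable (gaussianPDF 0 1) := measurable_gaussianPDF 0 1
      have hD : Measurable (fun x : Fin n → ℝ => ∏ i, gaussianPDF 0 1 (x i)) := by
        exact Finset.measurable_prod _ fun i _ => hg.comp (measurable_pi_apply i)
      calc Measure.map e.symm
            ((gaussianReal 0 1).prod (Measure.pi fun _ : Fin n => gaussianReal 0 1))
          = Measure.map e.symm ((volume.withDensity (gaussianPDF 0 1)).prod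
              ((Measure.pi fun _ : Fin n => (volume : Measure ℝ)).withDensity
                (fun x => ∏ i, gaussianPDF 0 1 (x i)))) := by rw [← hγ, ← ih]
        _ = Measure.map e.symm ((volume.prod (Measure.pi fun _ : Fin n => (volume : Measure ℝ))).withDensity
              (fun p => gaussianPDF 0 1 p.1 * ∏ i, gaussianPDF 0 1 (p.2 i))) := by
            rw [prod_withDensity _ _ hg hD]
        _ = (Measure.map e.symm (volume.prod (Measure.pi fun _ : Fin n => (volume : Measure ℝ)))).withDensity
              ((fun p : ℝ × (Fin n → ℝ) => gaussianPDF 0 1 p.1 * ∏ i, gaussianPDF 0 1 (p.2 i)) ∘ e.symm.symm) := by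
            have hmeas : Measurable (fun p : ℝ × (Fin n → ℝ) =>
                gaussianPDF 0 1 p.1 * ∏ i, gaussianPDF 0 1 (p.2 i)) :=
              (hg.comp measurable_fst).mul (hD.comp measurable_snd)
            rw [map_withDensity_equiv e.symm _ hmeas]
        _ = (Measure.pi fun _ : Fin (n+1) => (volume : Measure ℝ)).withDensity
              (fun x => ∏ i, gaussianPDF 0 1 (x i)) := by
            have hmp2 := (measurePreserving_piFinSuccAbove
              (fun _ : Fin (n+1) => (volume : Measure ℝ)) 0).symm
            rw [hmp2.map_eq]
            congr 1
            funext x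
            simp only [he, Function.comp_apply, MeasurableEquiv.symm_symm,
              MeasurableEquiv.piFinSuccAbove_apply, Fin.insertNthEquiv_symm_apply, Fin.zero_succAbove]
            rw [Fin.prod_univ_succ]; simp [Fin.removeNth, Fin.zero_succAbove]

lemma map_pair (d : ℕ) (i j : Fin d) (hij : i ≠ j) :
    (Measure.pi fun _ : Fin d => gaussianReal 0 1).map (fun y => (y i, y j))
      = (gaussianReal 0 1).prod (gaussianReal 0 1) := by
  have hmeas : Measurable (fun y : Fin d → ℝ => (y i, y j)) :=
    (measurable_pi_apply i).prodMk (measurable_pi_apply j)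
  refine (Measure.prod_eq fun s t hs ht => ?_).symm
  rw [Measure.map_apply hmeas (hs.prod ht)]
  classical
  set F : Fin d → Set ℝ := fun k => if k = i then s else if k = j then t else univ with hF
  have hpre : (fun y : Fin d → ℝ => (y i, y j)) ⁻¹' (s ×ˢ t) = Set.pi univ F := by
    ext y
    simp only [mem_preimage, mem_prod, Set.mem_pi, mem_univ, forall_true_left, hF]
    constructor
    · rintro ⟨h1, h2⟩ k
      by_cases hki : k = i
      · subst hki; rw [if_pos rfl]; exact h1
      · by_cases hkj : k = j
        · subst hkj; rw [if_neg hki, if_pos rfl]; exact h2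
        · rw [if_neg hki, if_neg hkj]; trivial
    · intro h
      refine ⟨?_, ?_⟩
      · have := h i; rwa [if_pos rfl] at this
      · have := h j; rwa [if_neg (Ne.symm hij), if_pos rfl] at this
  rw [hpre, Measure.pi_pi]
  have hsub : ({i, j} : Finset (Fin d)) ⊆ Finset.univ := Finset.subset_univ _
  rw [← Finset.prod_subset hsub (fun k _ hk => ?_)]
  · rw [Finset.prod_pair hij]
    congr 1
    · rw [hF]; simp
    · rw [hF]; simp [Ne.symm hij]
  · have hki : k ≠ i := by
      intro h; exact hk (by simp [h])
    have hkj : k ≠ j := by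
      intro h; exact hk (by simp [h])
    rw [hF]; simp only [if_neg hki, if_neg hkj]
    exact measure_univ

lemma arcsin_le_pi_div_two_mul {r : ℝ} (h0 : 0 ≤ r) (h1 : r ≤ 1) :
    Real.arcsin r ≤ π / 2 * r := by
  have hπ := Real.pi_pos
  have h2 : (0:ℝ) ≤ π / 2 * r := by positivity
  have h3 : π / 2 * r ≤ π / 2 := by
    nlinarith
  have hs : r ≤ Real.sin (π / 2 * r) := by
    have := Real.mul_le_sin (x := π / 2 * r) h2 h3
    calc r = 2 / π * (π / 2 * r) := by field_simp
    _ ≤ Real.sin (π / 2 * r) := this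
  calc Real.arcsin r ≤ Real.arcsin (Real.sin (π / 2 * r)) :=
        Real.monotone_arcsin hs
  _ = π / 2 * r := Real.arcsin_sin (by linarith) h3

lemma radial_integral : ∫ ρ in Ioi (0:ℝ), ρ * Real.exp (-ρ^2/2) = 1 := by
  have h := MeasureTheory.integral_Ioi_of_hasDerivAt_of_nonneg
    (g := fun ρ : ℝ => -Real.exp (-ρ^2/2)) (g' := fun ρ : ℝ => ρ * Real.exp (-ρ^2/2))
    (a := 0) (l := 0) ?_ ?_ ?_ ?_
  · rw [h]; simp
  · exact Continuous.continuousWithinAt (by continuity)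
  · intro x _
    have h1 : HasDerivAt (fun ρ : ℝ => -ρ^2/2) (-x) x := by
      have := ((hasDerivAt_pow 2 x).neg.div_const 2)
      simpa using this.congr_deriv (by ring)
    have := (h1.exp).neg
    exact this.congr_deriv (by ring)
  · intro x hx
    have : 0 < x := hx
    positivity
  · have : Tendsto (fun ρ : ℝ => -ρ^2/2) atTop atBot := by
      apply Filter.Tendsto.atBot_div_const (by norm_num)
      simpa using (tendsto_pow_atTop (n := 2) (by norm_num)).neg
    have := (Real.tendsto_exp_atBot.comp this).neg
    simpa using this

lemma angle_bound {A B : ℝ} (hB : 0 < B) (hBA : B ≤ A) :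
    volume (Ioo (-π) π ∩ {θ : ℝ | (A * Real.cos θ)^2 < B^2})
      ≤ ENNReal.ofReal (2 * π * (B / A)) := by
  have hA : 0 < A := lt_of_lt_of_le hB hBA
  set r := B / A with hr
  have hr0 : 0 < r := by positivity
  have hr1 : r ≤ 1 := by rw [hr, div_le_one hA]; exact hBA
  set c := Real.arccos r with hc
  have hc0 : 0 ≤ c := Real.arccos_nonneg r
  have hcle : c ≤ π / 2 := Real.arccos_le_pi_div_two.2 hr0.le
  have hcos : Real.cos c = r := Real.cos_arccos (by linarith) hr1
  have key : ∀ φ : ℝ, 0 ≤ φ → φ < π → |Real.cos φ| < r → c < φ ∧ φ < π - c := by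
    intro φ hφ0 hφπ habs
    constructor
    · by_contra h
      push_neg at h
      have := Real.cos_le_cos_of_nonneg_of_le_pi hφ0 (by linarith [Real.pi_pos]) h
      have h2 := le_abs_self (Real.cos φ)
      rw [hcos] at this
      linarith
    · by_contra h
      push_neg at h
      have := Real.cos_le_cos_of_nonneg_of_le_pi (by linarith [Real.pi_pos]) hφπ.le h
      rw [Real.cos_pi_sub, hcos] at this
      have h2 := neg_le_abs (Real.cos φ)
      linarith
  have hsub : Ioo (-π) π ∩ {θ : ℝ | (A * Real.cos θ)^2 < B^2}
      ⊆ Ioo (-(π - c)) (-c) ∪ Ioo c (π - c) := by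
    rintro θ ⟨hθI, hθΘ⟩
    have habs : |Real.cos θ| < r := by
      by_contra habs
      push_neg at habs
      have h1 : Real.cos θ ^ 2 = |Real.cos θ|^2 := (sq_abs _).symm
      have hB2 : B = A * r := by rw [hr]; field_simp
      simp only [mem_setOf_eq] at hθΘ
      have h3 : r^2 ≤ |Real.cos θ|^2 := by nlinarith [mul_self_le_mul_self hr0.le habs]
      nlinarith [mul_le_mul_of_nonneg_left h3 (sq_nonneg A)]
    rcases le_or_gt 0 θ with h0 | h0
    · right
      exact (key θ h0 hθI.2 habs).imp id id |>.elim fun h1 h2 => ⟨h1, h2⟩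
    · left
      have := key (-θ) (by linarith) (by linarith [hθI.1]) (by rwa [Real.cos_neg])
      constructor <;> linarith [this.1, this.2]
  calc volume (Ioo (-π) π ∩ {θ : ℝ | (A * Real.cos θ)^2 < B^2})
      ≤ volume (Ioo (-(π - c)) (-c) ∪ Ioo c (π - c)) := measure_mono hsub
    _ ≤ volume (Ioo (-(π - c)) (-c)) + volume (Ioo c (π - c)) := measure_union_le _ _
    _ = ENNReal.ofReal (π - 2*c) + ENNReal.ofReal (π - 2*c) := by
        rw [Real.volume_Ioo, Real.volume_Ioo]
        congr 1 <;> ring_nf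
    _ ≤ ENNReal.ofReal (2 * π * r) := by
        rw [← ENNReal.ofReal_add (by linarith) (by linarith)]
        apply ENNReal.ofReal_le_ofReal
        have h1 : Real.arcsin r ≤ π / 2 * r := arcsin_le_pi_div_two_mul hr0.le hr1
        have h2 : c = π / 2 - Real.arcsin r := Real.arccos_eq_pi_div_two_sub_arcsin r
        linarith

lemma gpdf_eq (x : ℝ) :
    gaussianPDFReal 0 1 x = (Real.sqrt (2*π))⁻¹ * Real.exp (-x^2/2) := by
  simp [gaussianPDFReal]

lemma gpdf_mul (x y : ℝ) :
    gaussianPDFReal 0 1 x * gaussianPDFReal 0 1 y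
      = (2*π)⁻¹ * Real.exp (-(x^2+y^2)/2) := by
  rw [gpdf_eq, gpdf_eq]
  have h : (Real.sqrt (2*π))⁻¹ * (Real.sqrt (2*π))⁻¹ = (2*π)⁻¹ := by
    rw [← mul_inv]
    rw [Real.mul_self_sqrt (by positivity)]
  have h2 : (Real.sqrt (2*π))⁻¹ * Real.exp (-x^2/2) * ((Real.sqrt (2*π))⁻¹ * Real.exp (-y^2/2))
      = ((Real.sqrt (2*π))⁻¹ * (Real.sqrt (2*π))⁻¹) * (Real.exp (-x^2/2) * Real.exp (-y^2/2)) := by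
    ring
  rw [h2, h, ← Real.exp_add, show -x^2/2 + -y^2/2 = -(x^2+y^2)/2 by ring]

lemma two_dim {A B : ℝ} (hB : 0 < B) (hBA : B ≤ A) :
    ((gaussianReal 0 1).prod (gaussianReal 0 1))
      {p : ℝ × ℝ | (A * p.1)^2 < B^2 * (p.1^2 + p.2^2)} ≤ ENNReal.ofReal (B / A) := by
  have hA : 0 < A := lt_of_lt_of_le hB hBA
  have hπ := Real.pi_pos
  set C := {p : ℝ × ℝ | (A * p.1)^2 < B^2 * (p.1^2 + p.2^2)} with hC
  have hCmeas : MeasurableSet C := by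
    apply measurableSet_lt
    · fun_prop
    · fun_prop
  set Θ := {θ : ℝ | (A * Real.cos θ)^2 < B^2} with hΘ
  have hΘmeas : MeasurableSet Θ := by
    apply measurableSet_lt
    · fun_prop
    · fun_prop
  have h1 : (1 : ℝ≥0) ≠ 0 := one_ne_zero
  have hγ : gaussianReal 0 1 = volume.withDensity (gaussianPDF 0 1) :=
    gaussianReal_of_var_ne_zero 0 h1
  haveI : SigmaFinite ((volume : Measure ℝ).withDensity (gaussianPDF 0 1)) := by
    rw [← hγ]; infer_instance
  have hg : Measurable (gaussianPDF 0 1) := measurable_gaussianPDF 0 1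
  set Freal : ℝ × ℝ → ℝ :=
    C.indicator (fun p => gaussianPDFReal 0 1 p.1 * gaussianPDFReal 0 1 p.2) with hFreal
  have hGint : Integrable (fun p : ℝ × ℝ => gaussianPDFReal 0 1 p.1 * gaussianPDFReal 0 1 p.2)
      (volume : Measure (ℝ × ℝ)) := by
    rw [Measure.volume_eq_prod]
    exact (integrable_gaussianPDFReal 0 1).mul_prod (integrable_gaussianPDFReal 0 1)
  have hFint : Integrable Freal (volume : Measure (ℝ × ℝ)) := hGint.indicator hCmeas
  have step1 : ((gaussianReal 0 1).prod (gaussianReal 0 1)) C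
      = ENNReal.ofReal (∫ p, Freal p) := by
    rw [hγ, prod_withDensity _ _ hg hg, ← Measure.volume_eq_prod,
      withDensity_apply _ hCmeas, ← lintegral_indicator hCmeas]
    rw [ofReal_integral_eq_lintegral_ofReal hFint (ae_of_all _ (fun p => by
      apply Set.indicator_nonneg
      intro q _
      exact mul_nonneg (gaussianPDFReal_nonneg _ _ _) (gaussianPDFReal_nonneg _ _ _)))]
    congr 1
    funext p
    by_cases hp : p ∈ C
    · simp only [Set.indicator_of_mem hp, hFreal, gaussianPDF_def]
      rw [ENNReal.ofReal_mul (gaussianPDFReal_nonneg _ _ _)]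
    · simp [Set.indicator_of_notMem hp, hFreal]
  have step2 : ∫ p, Freal p
      = ∫ p in polarCoord.target,
          ((2*π)⁻¹ * (p.1 * Real.exp (-p.1^2/2))) * Θ.indicator (fun _ => (1:ℝ)) p.2 := by
    rw [← integral_comp_polarCoord_symm Freal]
    apply setIntegral_congr_fun polarCoord.open_target.measurableSet
    rintro ⟨ρ, θ⟩ hp
    have hρ : 0 < ρ := hp.1
    have hsymm : polarCoord.symm (ρ, θ) = (ρ * Real.cos θ, ρ * Real.sin θ) := rfl
    dsimp only
    rw [hsymm]
    have hval : gaussianPDFReal 0 1 (ρ * Real.cos θ) * gaussianPDFReal 0 1 (ρ * Real.sin θ)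
        = (2*π)⁻¹ * Real.exp (-ρ^2/2) := by
      rw [gpdf_mul]
      congr 2
      have := Real.sin_sq_add_cos_sq θ
      nlinarith [this]
    by_cases hθ : θ ∈ Θ
    · have hmem : (ρ * Real.cos θ, ρ * Real.sin θ) ∈ C := by
        simp only [hC, mem_setOf_eq]
        simp only [hΘ, mem_setOf_eq] at hθ
        have hsum : (ρ * Real.cos θ)^2 + (ρ * Real.sin θ)^2 = ρ^2 := by
          nlinarith [Real.sin_sq_add_cos_sq θ]
        rw [hsum]
        calc (A * (ρ * Real.cos θ))^2 = (A * Real.cos θ)^2 * ρ^2 := by ring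
          _ < B^2 * ρ^2 := by
              apply mul_lt_mul_of_pos_right hθ
              positivity
      rw [hFreal]
      simp only [Set.indicator_of_mem hmem, Set.indicator_of_mem hθ, smul_eq_mul]
      rw [hval]; ring
    · have hmem : (ρ * Real.cos θ, ρ * Real.sin θ) ∉ C := by
        simp only [hC, mem_setOf_eq]
        simp only [hΘ, mem_setOf_eq, not_lt] at hθ ⊢
        have hsum : (ρ * Real.cos θ)^2 + (ρ * Real.sin θ)^2 = ρ^2 := by
          nlinarith [Real.sin_sq_add_cos_sq θ]
        rw [hsum]
        calc B^2 * ρ^2 ≤ (A * Real.cos θ)^2 * ρ^2 := by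
              apply mul_le_mul_of_nonneg_right hθ
              positivity
          _ = (A * (ρ * Real.cos θ))^2 := by ring
      rw [hFreal]
      simp [Set.indicator_of_notMem hmem, Set.indicator_of_notMem hθ]
  have htarget : polarCoord.target = Ioi (0:ℝ) ×ˢ Ioo (-π) π := rfl
  set m : ℝ := (volume (Ioo (-π) π ∩ Θ)).toReal with hm
  have hm0 : 0 ≤ m := ENNReal.toReal_nonneg
  have step3 : ∫ p in polarCoord.target,
      ((2*π)⁻¹ * (p.1 * Real.exp (-p.1^2/2))) * Θ.indicator (fun _ => (1:ℝ)) p.2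
      = (2*π)⁻¹ * m := by
    rw [htarget, Measure.volume_eq_prod,
      setIntegral_prod_mul (fun ρ : ℝ => (2*π)⁻¹ * (ρ * Real.exp (-ρ^2/2)))
        (Θ.indicator (fun _ => (1:ℝ))) (Ioi (0:ℝ)) (Ioo (-π) π)]
    have hrad : ∫ ρ in Ioi (0:ℝ), (2*π)⁻¹ * (ρ * Real.exp (-ρ^2/2)) = (2*π)⁻¹ := by
      rw [integral_const_mul, radial_integral, mul_one]
    have hang : ∫ θ in Ioo (-π) π, Θ.indicator (fun _ => (1:ℝ)) θ = m := by
      rw [setIntegral_indicator hΘmeas]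
      simp [hm, Measure.real]
    rw [hrad, hang]
  have hmle : m ≤ 2 * π * (B / A) := by
    apply ENNReal.toReal_le_of_le_ofReal (by positivity)
    exact angle_bound hB hBA
  rw [step1, step2, step3]
  apply ENNReal.ofReal_le_ofReal
  calc (2*π)⁻¹ * m ≤ (2*π)⁻¹ * (2 * π * (B / A)) := by
        apply mul_le_mul_of_nonneg_left hmle (by positivity)
    _ = B / A := by field_simp

lemma gauss_prod_form (d : ℕ) (y : Fin d → ℝ) :
    ∏ i, gaussianPDF 0 1 (y i)
      = ENNReal.ofReal ((Real.sqrt (2*π))⁻¹ ^ d * Real.exp (-(∑ i, (y i)^2)/2)) := by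
  have h : ∀ i : Fin d, gaussianPDF 0 1 (y i)
      = ENNReal.ofReal ((Real.sqrt (2*π))⁻¹ * Real.exp (-(y i)^2/2)) := by
    intro i; rw [gaussianPDF_def]; dsimp only; rw [gpdf_eq]
  simp_rw [h]
  rw [← ENNReal.ofReal_prod_of_nonneg (fun i _ => by positivity)]
  congr 1
  rw [Finset.prod_mul_distrib, Finset.prod_const, ← Real.exp_sum]
  congr 2
  · simp
  · rw [← Finset.sum_div, ← Finset.sum_neg_distrib]

lemma euclid_sum_sq (d : ℕ) (z : EuclideanSpace ℝ (Fin d)) :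
    ∑ i, (z i)^2 = ‖z‖^2 := by
  rw [EuclideanSpace.norm_eq, Real.sq_sqrt (by positivity)]
  simp [sq_abs]

lemma gauss_pi_rotate (d : ℕ) (T : EuclideanSpace ℝ (Fin d) ≃ₗᵢ[ℝ] EuclideanSpace ℝ (Fin d)) :
    MeasurePreserving
      (⇑(((((MeasurableEquiv.toLp 2 (Fin d → ℝ)).symm).symm.trans
          T.toHomeomorph.toMeasurableEquiv).trans ((MeasurableEquiv.toLp 2 (Fin d → ℝ)).symm))))
      (Measure.pi fun _ : Fin d => gaussianReal 0 1)
      (Measure.pi fun _ : Fin d => gaussianReal 0 1) := by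
  set me := (MeasurableEquiv.toLp 2 (Fin d → ℝ)).symm with hme
  set Tm := T.toHomeomorph.toMeasurableEquiv with hTm
  set gm := (me.symm.trans Tm).trans me with hgm
  have hD : Measurable (fun x : Fin d → ℝ => ∏ i, gaussianPDF 0 1 (x i)) :=
    Finset.measurable_prod _ fun i _ =>
      (measurable_gaussianPDF 0 1).comp (measurable_pi_apply i)
  have hvolmp : MeasurePreserving gm volume volume := by
    have h1 := EuclideanSpace.volume_preserving_symm_measurableEquiv_toLp (Fin d)
    have h2 := T.measurePreserving
    exact h1.comp (h2.comp h1.symm)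
  constructor
  · exact gm.measurable
  · have hμ : Measure.pi (fun _ : Fin d => gaussianReal 0 1)
        = (volume : Measure (Fin d → ℝ)).withDensity
            (fun x => ∏ i, gaussianPDF 0 1 (x i)) := by
      rw [pi_gauss d, ← volume_pi]
    rw [hμ, map_withDensity_equiv gm _ hD, hvolmp.map_eq]
    congr 1
    funext x
    simp only [Function.comp_apply]
    have hcoord : ∀ i, (gm.symm x) i
        = (T.symm ((WithLp.equiv 2 (Fin d → ℝ)).symm x) : EuclideanSpace ℝ (Fin d)) i :=
      fun i => rfl
    rw [gauss_prod_form, gauss_prod_form]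
    congr 2
    simp_rw [hcoord]
    rw [euclid_sum_sq, LinearIsometryEquiv.norm_map, ← euclid_sum_sq]
    rfl

set_option maxHeartbeats 1000000 in
theorem gaussian_misclassification_bound (d : ℕ) (a b : Fin d → ℝ)
    (ha : a ≠ 0) (hb : b ≠ 0)
    (hba : Real.sqrt (∑ i, (b i) ^ 2) ≤ Real.sqrt (∑ i, (a i) ^ 2)) :
    (Measure.pi fun _ : Fin d => gaussianReal 0 1)
        {x | (∑ i, x i * a i) ^ 2 < (∑ i, x i * b i) ^ 2}
      ≤ ENNReal.ofReal (Real.sqrt (∑ i, (b i) ^ 2) / Real.sqrt (∑ i, (a i) ^ 2)) := by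
  set μ := Measure.pi fun _ : Fin d => gaussianReal 0 1 with hμ_def
  set S := {x : Fin d → ℝ | (∑ i, x i * a i) ^ 2 < (∑ i, x i * b i) ^ 2} with hS_def
  have hSmeas : MeasurableSet S := by
    apply measurableSet_lt <;> fun_prop
  set A := Real.sqrt (∑ i, (a i) ^ 2) with hA_def
  set B := Real.sqrt (∑ i, (b i) ^ 2) with hB_def
  have hsuma : 0 < ∑ i, (a i)^2 := by
    obtain ⟨i, hi⟩ := Function.ne_iff.1 ha
    exact Finset.sum_pos' (fun j _ => sq_nonneg _)
      ⟨i, Finset.mem_univ i, lt_of_le_of_ne (sq_nonneg _) (Ne.symm (pow_ne_zero 2 hi))⟩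
  have hsumb : 0 < ∑ i, (b i)^2 := by
    obtain ⟨i, hi⟩ := Function.ne_iff.1 hb
    exact Finset.sum_pos' (fun j _ => sq_nonneg _)
      ⟨i, Finset.mem_univ i, lt_of_le_of_ne (sq_nonneg _) (Ne.symm (pow_ne_zero 2 hi))⟩
  have hA : 0 < A := Real.sqrt_pos.2 hsuma
  have hB : 0 < B := Real.sqrt_pos.2 hsumb
  set a' : EuclideanSpace ℝ (Fin d) := (WithLp.equiv 2 (Fin d → ℝ)).symm a with ha'
  set b' : EuclideanSpace ℝ (Fin d) := (WithLp.equiv 2 (Fin d → ℝ)).symm b with hb'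
  have ha'app : ∀ i, a' i = a i := fun i => rfl
  have hb'app : ∀ i, b' i = b i := fun i => rfl
  have hnorm_sq : ∀ x : EuclideanSpace ℝ (Fin d), ‖x‖^2 = ∑ i, (x i)^2 := by
    intro x
    rw [EuclideanSpace.norm_eq, Real.sq_sqrt (by positivity)]
    simp [sq_abs]
  have hnorm_a : ‖a'‖ = A := by
    have h := hnorm_sq a'
    simp only [ha'app] at h
    rw [hA_def, ← h, Real.sqrt_sq (norm_nonneg _)]
  have hnorm_b : ‖b'‖ = B := by
    have h := hnorm_sq b'
    simp only [hb'app] at h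
    rw [hB_def, ← h, Real.sqrt_sq (norm_nonneg _)]
  have hinner : ∀ (x : EuclideanSpace ℝ (Fin d)) (y : Fin d → ℝ),
      ⟪x, (WithLp.equiv 2 (Fin d → ℝ)).symm y⟫ = ∑ i, x i * y i := by
    intro x y
    rw [PiLp.inner_apply]
    simp [mul_comm]
  obtain ⟨f0, hf0_def⟩ : ∃ f0 : EuclideanSpace ℝ (Fin d), f0 = ‖a'‖⁻¹ • a' := ⟨_, rfl⟩
  have ha'ne : a' ≠ 0 := by
    intro h
    apply ha
    funext i
    have := congrArg (fun v : EuclideanSpace ℝ (Fin d) => v i) h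
    simpa [ha'app] using this
  have hf0norm : ‖f0‖ = 1 := by rw [hf0_def]; exact norm_smul_inv_norm ha'ne
  have ha'f0 : a' = A • f0 := by
    rw [hf0_def, smul_smul, hnorm_a, mul_inv_cancel₀ hA.ne', one_smul]
  set β : ℝ := ⟪f0, b'⟫ with hβ
  obtain ⟨w, hw⟩ : ∃ w : EuclideanSpace ℝ (Fin d), w = b' - β • f0 := ⟨_, rfl⟩
  have hworth : ⟪f0, w⟫ = 0 := by
    rw [hw, inner_sub_right, real_inner_smul_right, real_inner_self_eq_norm_sq, hf0norm]
    ring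
  by_cases hwz : w = 0
  · -- degenerate case: b parallel to a, event is empty
    have hb'f0 : b' = β • f0 := by
      rw [hw] at hwz
      have := sub_eq_zero.1 hwz
      exact this
    have hβB : β^2 = B^2 := by
      have h1 : ‖b'‖ = |β| := by
        rw [hb'f0, norm_smul, hf0norm, mul_one]; rfl
      rw [← hnorm_b, h1, sq_abs]
    have hbi : ∀ i, b i = β / A * a i := by
      intro i
      have h2 := congrArg (fun v : EuclideanSpace ℝ (Fin d) => v i) hb'f0
      simp only [hf0_def, PiLp.smul_apply, smul_eq_mul, hnorm_a] at h2
      rw [hb'app i] at h2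
      rw [h2, ha'app i]
      ring
    have hSempty : S = ∅ := by
      rw [hS_def]
      ext x
      simp only [mem_setOf_eq, mem_empty_iff_false, iff_false, not_lt]
      have hsum : ∑ i, x i * b i = β / A * ∑ i, x i * a i := by
        rw [Finset.mul_sum]
        apply Finset.sum_congr rfl
        intro i _
        rw [hbi i]; ring
      rw [hsum]
      have hfrac : (β/A)^2 ≤ 1 := by
        rw [div_pow, div_le_one (by positivity), hβB]
        exact pow_le_pow_left₀ hB.le hba 2
      calc (β / A * ∑ i, x i * a i)^2 = (β/A)^2 * (∑ i, x i * a i)^2 := by ring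
        _ ≤ 1 * (∑ i, x i * a i)^2 := by
            apply mul_le_mul_of_nonneg_right hfrac (sq_nonneg _)
        _ = (∑ i, x i * a i)^2 := one_mul _
    rw [hSempty]
    simp
  · set δ : ℝ := ‖w‖ with hδ
    have hδpos : 0 < δ := norm_pos_iff.2 hwz
    obtain ⟨f1, hf1_def⟩ : ∃ f1 : EuclideanSpace ℝ (Fin d), f1 = δ⁻¹ • w := ⟨_, rfl⟩
    have hf1norm : ‖f1‖ = 1 := by rw [hf1_def, hδ]; exact norm_smul_inv_norm hwz
    have hf0f1 : ⟪f0, f1⟫ = 0 := by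
      rw [hf1_def, real_inner_smul_right, hworth, mul_zero]
    have hf1f0 : ⟪f1, f0⟫ = 0 := by rw [real_inner_comm]; exact hf0f1
    have hδf1 : δ • f1 = w := by
      rw [hf1_def, smul_smul, mul_inv_cancel₀ hδpos.ne', one_smul]
    have hbdecomp : b' = β • f0 + δ • f1 := by
      rw [hδf1, hw]; abel
    have hB2 : β^2 + δ^2 = B^2 := by
      have hexp : ‖b'‖^2 = β^2 + δ^2 := by
        rw [hbdecomp, norm_add_sq_real]
        rw [real_inner_smul_left, real_inner_smul_right, hf0f1]
        rw [norm_smul, norm_smul, hf0norm, hf1norm]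
        simp [mul_pow, sq_abs]
      rw [← hexp, hnorm_b]
    have hf0f0 : ⟪f0, f0⟫ = (1:ℝ) := by
      rw [real_inner_self_eq_norm_sq, hf0norm]; norm_num
    have hf1f1 : ⟪f1, f1⟫ = (1:ℝ) := by
      rw [real_inner_self_eq_norm_sq, hf1norm]; norm_num
    have ho2 : Orthonormal ℝ ![f0, f1] := by
      rw [orthonormal_iff_ite]
      intro i j
      fin_cases i <;> fin_cases j <;>
        norm_num [hf0f0, hf1f1, hf0f1, hf1f0, hf0norm, hf1norm]
    have hd2 : 2 ≤ d := by
      have h1 := ho2.linearIndependent.fintype_card_le_finrank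
      simpa using h1
    set i0 : Fin d := ⟨0, by omega⟩ with hi0
    set i1 : Fin d := ⟨1, by omega⟩ with hi1
    have hne01 : i0 ≠ i1 := by
      simp [hi0, hi1, Fin.ext_iff]
    classical
    set v : Fin d → EuclideanSpace ℝ (Fin d) := fun i => if i = i0 then f0 else f1 with hv_def
    have hvi0 : v i0 = f0 := by simp [hv_def]
    have hvi1 : v i1 = f1 := by simp [hv_def, hne01.symm]
    have hvon : Orthonormal ℝ (({i0, i1} : Set (Fin d)).restrict v) := by
      rw [orthonormal_iff_ite]
      rintro ⟨i, hi⟩ ⟨j, hj⟩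
      show ⟪v i, v j⟫ = _
      rcases hi with rfl | hi <;> rcases hj with rfl | hj
      · rw [hvi0, if_pos rfl]; exact hf0f0
      · rcases hj with rfl
        rw [hvi0, hvi1, if_neg (by simp [Subtype.ext_iff, hne01])]; exact hf0f1
      · rcases hi with rfl
        rw [hvi1, hvi0, if_neg (by simp [Subtype.ext_iff, hne01.symm])]; exact hf1f0
      · rcases hi with rfl; rcases hj with rfl
        rw [hvi1, if_pos rfl]; exact hf1f1
    obtain ⟨bas, hbas⟩ := Orthonormal.exists_orthonormalBasis_extension_of_card_eq
      (by simp) hvon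
    have hbas0 : bas i0 = f0 := by
      have := hbas i0 (by simp)
      simpa [hv_def] using this
    have hbas1 : bas i1 = f1 := by
      have := hbas i1 (by simp)
      simpa [hv_def, hne01.symm] using this
    -- rotate
    set T : EuclideanSpace ℝ (Fin d) ≃ₗᵢ[ℝ] EuclideanSpace ℝ (Fin d) := bas.repr.symm with hT
    set me := (MeasurableEquiv.toLp 2 (Fin d → ℝ)).symm with hme
    set gm := ((me.symm.trans T.toHomeomorph.toMeasurableEquiv).trans me) with hgm
    have hmp : MeasurePreserving (⇑gm) μ μ := gauss_pi_rotate d T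
    have hsum_a : ∀ y : Fin d → ℝ, ∑ i, (gm y) i * a i = A * y i0 := by
      intro y
      have h1 : ∑ i, (gm y) i * a i
          = ⟪(T ((WithLp.equiv 2 (Fin d → ℝ)).symm y) : EuclideanSpace ℝ (Fin d)), a'⟫ := by
        rw [ha', hinner]
        rfl
      rw [h1, ha'f0, real_inner_smul_right, ← hbas0]
      congr 1
      rw [real_inner_comm, ← OrthonormalBasis.repr_apply_apply]
      show (bas.repr (bas.repr.symm _)) i0 = y i0
      rw [LinearIsometryEquiv.apply_symm_apply]
      rfl
    have hsum_b : ∀ y : Fin d → ℝ, ∑ i, (gm y) i * b i = β * y i0 + δ * y i1 := by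
      intro y
      have h1 : ∑ i, (gm y) i * b i
          = ⟪(T ((WithLp.equiv 2 (Fin d → ℝ)).symm y) : EuclideanSpace ℝ (Fin d)), b'⟫ := by
        rw [hb', hinner]
        rfl
      rw [h1, hbdecomp, inner_add_right, real_inner_smul_right, real_inner_smul_right,
        ← hbas0, ← hbas1]
      congr 2
      · rw [real_inner_comm, ← OrthonormalBasis.repr_apply_apply]
        show (bas.repr (bas.repr.symm _)) i0 = y i0
        rw [LinearIsometryEquiv.apply_symm_apply]
        rfl
      · rw [real_inner_comm, ← OrthonormalBasis.repr_apply_apply]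
        show (bas.repr (bas.repr.symm _)) i1 = y i1
        rw [LinearIsometryEquiv.apply_symm_apply]
        rfl
    have hpre : ⇑gm ⁻¹' S = {y : Fin d → ℝ | (A * y i0)^2 < (β * y i0 + δ * y i1)^2} := by
      ext y
      simp only [mem_preimage, hS_def, mem_setOf_eq]
      rw [hsum_a y, hsum_b y]
    have hstep1 : μ S = μ {y : Fin d → ℝ | (A * y i0)^2 < (β * y i0 + δ * y i1)^2} := by
      rw [← hpre]
      exact (hmp.measure_preimage hSmeas.nullMeasurableSet).symm
    have hstep2 : μ {y : Fin d → ℝ | (A * y i0)^2 < (β * y i0 + δ * y i1)^2}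
        ≤ μ {y : Fin d → ℝ | (A * y i0)^2 < B^2 * ((y i0)^2 + (y i1)^2)} := by
      apply measure_mono
      intro y hy
      simp only [mem_setOf_eq] at hy ⊢
      have hCS : (β * y i0 + δ * y i1)^2 ≤ (β^2 + δ^2) * ((y i0)^2 + (y i1)^2) := by
        nlinarith [sq_nonneg (β * y i1 - δ * y i0)]
      rw [← hB2]
      exact lt_of_lt_of_le hy hCS
    have hstep3 : μ {y : Fin d → ℝ | (A * y i0)^2 < B^2 * ((y i0)^2 + (y i1)^2)}
        = ((gaussianReal 0 1).prod (gaussianReal 0 1))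
            {p : ℝ × ℝ | (A * p.1)^2 < B^2 * (p.1^2 + p.2^2)} := by
      rw [← map_pair d i0 i1 hne01]
      rw [Measure.map_apply ((measurable_pi_apply i0).prodMk (measurable_pi_apply i1))]
      · rfl
      · apply measurableSet_lt <;> fun_prop
    calc μ S = μ {y : Fin d → ℝ | (A * y i0)^2 < (β * y i0 + δ * y i1)^2} := hstep1
      _ ≤ μ {y : Fin d → ℝ | (A * y i0)^2 < B^2 * ((y i0)^2 + (y i1)^2)} := hstep2
      _ = ((gaussianReal 0 1).prod (gaussianReal 0 1))
            {p : ℝ × ℝ | (A * p.1)^2 < B^2 * (p.1^2 + p.2^2)} := hstep3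
      _ ≤ ENNReal.ofReal (B / A) := two_dim hB hba
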